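/- Let n and m be positive integers, e = gcd(n,m), Γ the closed segment in ℝ² from (m,0) to (0,n), and Δ the closed triangle with vertices (0,0), (m,0), (0,n). Then there exists a lattice point A₁ ∈ (Δ ∩ ℤ²) \setminus Γ such that the triangle T = conv{(m,0), (0,n), A₁} satisfies T ∩ ℤ² = (Γ ∩ ℤ²) ∪ {A₁}; moreover T is the image of the triangle conv{(0,0), (e,0), (0,1)} under an affine map v ↦ Mv + w with M an integer 2×2 matrix of determinant ±1 and w ∈ ℤ². -/

import Mathlib

noncomputable section

/-- Embedding of an integral point into the real plane. -/
def latticeEmb (p : ℤ × ℤ) : ℝ × ℝ := ((p.1 : ℝ), (p.2 : ℝ))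

/-! Write `n = p e`, `m = q e` with `p, q` coprime. The linear form `ℓ (x, y) = p x + q y` equals
`p q e` on `Γ`, and since `p q e - 1` exceeds the Frobenius number `p q - p - q` of `{p, q}`,
some `A₁ = (a, b)` with `a, b ≥ 0` has `ℓ A₁ = p q e - 1`. Then `T` lies between two consecutive
integral level lines of `ℓ`, so a lattice point of `T` lies on `Γ` or is `A₁`. The affine map with
linear part `[[-q, a - m], [p, b]]`, of determinant `p q e - ℓ A₁ = 1`, and translation `(m, 0)`
sends `(0, 0), (e, 0), (0, 1)` to `(m, 0), (0, n), A₁`. -/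

open Set

theorem mem_convexHull_triple_iff {𝕜 E : Type*} [Field 𝕜] [LinearOrder 𝕜] [IsStrictOrderedRing 𝕜]
    [AddCommGroup E] [Module 𝕜 E] {x y z v : E} :
    v ∈ convexHull 𝕜 {x, y, z} ↔
      ∃ a b c : 𝕜, 0 ≤ a ∧ 0 ≤ b ∧ 0 ≤ c ∧ a + b + c = 1 ∧ a • x + b • y + c • z = v := by
  constructor
  · rw [← convexJoin_segment_singleton, mem_convexJoin]
    rintro ⟨_, ⟨a, b, ha, hb, hab, rfl⟩, _, rfl, s, t, hs, ht, hst, rfl⟩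
    refine ⟨s * a, s * b, t, by positivity, by positivity, ht, ?_, ?_⟩
    · linear_combination s * hab + hst
    · simp only [smul_add, smul_smul]
  · rintro ⟨a, b, c, ha, hb, hc, habc, rfl⟩
    have h := (convex_convexHull 𝕜 ({x, y, z} : Set E)).sum_mem (t := Finset.univ)
      (w := ![a, b, c]) (z := ![x, y, z]) (fun i _ => by fin_cases i <;> simpa)
      (by simpa [Fin.sum_univ_three] using habc)
      (fun i _ => subset_convexHull 𝕜 _ (by fin_cases i <;> simp))
    simpa [Fin.sum_univ_three, add_assoc] using h

theorem mem_segment_or_eq_of_mem_convexHull_triple {E : Type*} [AddCommGroup E] [Module ℝ E]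
    (ℓ : E →ₗ[ℝ] ℝ) {x y z v : E} {N k : ℤ} (hx : ℓ x = N) (hy : ℓ y = N) (hz : ℓ z = N - 1)
    (hv : v ∈ convexHull ℝ {x, y, z}) (hk : ℓ v = k) : v ∈ segment ℝ x y ∨ v = z := by
  obtain ⟨a, b, c, ha, hb, hc, habc, rfl⟩ := mem_convexHull_triple_iff.1 hv
  simp only [map_add, map_smul, hx, hy, hz, smul_eq_mul] at hk
  have hck : c = ((N - k : ℤ) : ℝ) := by push_cast; linear_combination -hk + N * habc
  have hc01 : N - k = 0 ∨ N - k = 1 := by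
    have h0 : (0 : ℝ) ≤ ((N - k : ℤ) : ℝ) := hck ▸ hc
    have h1 : ((N - k : ℤ) : ℝ) ≤ 1 := hck ▸ (by linarith)
    have : 0 ≤ N - k ∧ N - k ≤ 1 := ⟨by exact_mod_cast h0, by exact_mod_cast h1⟩
    omega
  rcases hc01 with h | h
  · rw [h, Int.cast_zero] at hck
    subst hck
    exact Or.inl ⟨a, b, ha, hb, by linarith, by simp⟩
  · rw [h, Int.cast_one] at hck
    subst hck
    obtain ⟨rfl, rfl⟩ : a = 0 ∧ b = 0 := ⟨by linarith, by linarith⟩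
    exact Or.inr (by simp)

theorem mk_mem_convexHull_zero_of_le {m n x y : ℝ} (hm : 0 < m) (hn : 0 < n) (hx : 0 ≤ x)
    (hy : 0 ≤ y) (h : n * x + m * y ≤ n * m) :
    (x, y) ∈ convexHull ℝ {(0, 0), (m, 0), (0, n)} := by
  refine mem_convexHull_triple_iff.2
    ⟨1 - x / m - y / n, x / m, y / n, ?_, by positivity, by positivity, by ring, ?_⟩
  · rw [sub_sub, sub_nonneg, div_add_div _ _ hm.ne' hn.ne', div_le_one (by positivity)]
    linarith
  · ext <;> simp [hm.ne', hn.ne']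

theorem exists_nonneg_mul_add_mul_eq {p q K : ℤ} (hp : 0 < p) (hq : 0 < q) (hpq : IsCoprime p q)
    (hK : p * q - p - q < K) : ∃ a b : ℤ, 0 ≤ a ∧ 0 ≤ b ∧ p * a + q * b = K := by
  obtain ⟨u, v, huv⟩ := hpq
  have hdiv := Int.emod_add_mul_ediv (K * u) q
  set a := K * u % q
  have hsum : p * a + q * (K * v + p * (K * u / q)) = K := by
    linear_combination K * huv + p * hdiv
  refine ⟨a, _, Int.emod_nonneg _ hq.ne', ?_, hsum⟩
  have ha : a < q := Int.emod_lt_of_pos _ hq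
  have hb : -q < q * (K * v + p * (K * u / q)) := by nlinarith
  nlinarith

def intLinearForm (p q : ℤ) : ℝ × ℝ →ₗ[ℝ] ℝ :=
  (p : ℝ) • LinearMap.fst ℝ ℝ ℝ + (q : ℝ) • LinearMap.snd ℝ ℝ ℝ

theorem intLinearForm_apply (p q : ℤ) (v : ℝ × ℝ) : intLinearForm p q v = p * v.1 + q * v.2 :=
  rfl

theorem intLinearForm_latticeEmb (p q : ℤ) (z : ℤ × ℤ) :
    intLinearForm p q (latticeEmb z) = ((p * z.1 + q * z.2 : ℤ) : ℝ) := by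
  simp [intLinearForm_apply, latticeEmb]

theorem latticeEmb_injective : Function.Injective latticeEmb := fun z w h => by
  simp only [latticeEmb, Prod.mk.injEq, Int.cast_inj] at h
  exact Prod.ext h.1 h.2

section LatticeWidthOne

variable {p q : ℤ} {X Y Z : ℤ × ℤ}

theorem latticeEmb_notMem_segment (hXY : p * X.1 + q * X.2 = p * Y.1 + q * Y.2)
    (hZ : p * Z.1 + q * Z.2 + 1 = p * X.1 + q * X.2) :
    latticeEmb Z ∉ segment ℝ (latticeEmb X) (latticeEmb Y) := fun h => by
  have hlevel := (convex_hyperplane (intLinearForm p q).isLinear _).segment_subset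
    (intLinearForm_latticeEmb p q X) ((intLinearForm_latticeEmb p q Y).trans (by rw [hXY])) h
  rw [mem_ofPred_eq, intLinearForm_latticeEmb, Int.cast_inj] at hlevel
  omega

theorem setOf_latticeEmb_mem_convexHull_triple (hXY : p * X.1 + q * X.2 = p * Y.1 + q * Y.2)
    (hZ : p * Z.1 + q * Z.2 + 1 = p * X.1 + q * X.2) :
    {w : ℤ × ℤ | latticeEmb w ∈ convexHull ℝ {latticeEmb X, latticeEmb Y, latticeEmb Z}} =
      {w | latticeEmb w ∈ segment ℝ (latticeEmb X) (latticeEmb Y)} ∪ {Z} := by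
  ext w
  simp only [mem_ofPred_eq, mem_union, mem_singleton_iff]
  constructor
  · intro hw
    have hY : intLinearForm p q (latticeEmb Y) = ((p * X.1 + q * X.2 : ℤ) : ℝ) := by
      rw [intLinearForm_latticeEmb, hXY]
    have hZ' : intLinearForm p q (latticeEmb Z) = ((p * X.1 + q * X.2 : ℤ) : ℝ) - 1 := by
      rw [intLinearForm_latticeEmb, ← hZ]; push_cast; ring
    exact (mem_segment_or_eq_of_mem_convexHull_triple _ (intLinearForm_latticeEmb p q X) hY hZ'
      hw (intLinearForm_latticeEmb p q w)).imp_right (latticeEmb_injective ·)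
  · rintro (hw | rfl)
    · rw [← convexHull_pair] at hw
      exact convexHull_mono (by intro v; simp only [mem_insert_iff, mem_singleton_iff]; tauto) hw
    · exact subset_convexHull ℝ _ (by simp)

end LatticeWidthOne

def intAffineMap (M : Matrix (Fin 2) (Fin 2) ℤ) (w : ℤ × ℤ) : ℝ × ℝ →ᵃ[ℝ] ℝ × ℝ :=
  ((intLinearForm (M 0 0) (M 0 1)).prod (intLinearForm (M 1 0) (M 1 1))).toAffineMap +
    AffineMap.const ℝ (ℝ × ℝ) (latticeEmb w)

theorem coe_intAffineMap (M : Matrix (Fin 2) (Fin 2) ℤ) (w : ℤ × ℤ) :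
    ⇑(intAffineMap M w) = fun v : ℝ × ℝ =>
      ((M 0 0 : ℝ) * v.1 + (M 0 1 : ℝ) * v.2 + (w.1 : ℝ),
        (M 1 0 : ℝ) * v.1 + (M 1 1 : ℝ) * v.2 + (w.2 : ℝ)) :=
  rfl

theorem exists_det_eq_one_convexHull_eq_image {p q e a b : ℤ} (h : p * a + q * b = p * q * e - 1) :
    ∃ M : Matrix (Fin 2) (Fin 2) ℤ, ∃ w : ℤ × ℤ, M.det = 1 ∧
      convexHull ℝ {latticeEmb (q * e, 0), latticeEmb (0, p * e), latticeEmb (a, b)} =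
        intAffineMap M w '' convexHull ℝ {(0, 0), ((e : ℝ), 0), (0, 1)} := by
  refine ⟨!![-q, a - q * e; p, b], (q * e, 0), ?_, ?_⟩
  · rw [Matrix.det_fin_two_of]
    linear_combination -h
  · rw [AffineMap.image_convexHull, image_insert_eq, image_insert_eq, image_singleton,
      coe_intAffineMap]
    congr 3 <;> ext <;> simp [latticeEmb]

/-- for the Newton diagram `Δ` with vertices (0,0), (m,0), (0,n) and compact edge
`Γ = [(m,0),(0,n)]` of integral length `e = gcd(n,m)`, there exists a lattice point `A₁` of
`Δ \ Γ` such that the triangle `T = conv{(m,0),(0,n),A₁}` contains no lattice points besides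
`A₁` and those of `Γ`, and `T` is the image of `conv{(0,0),(e,0),(0,1)}` by an affine map
`v ↦ Mv + w` with `M` an integral matrix of determinant ±1 and `w ∈ ℤ²`. -/
theorem exists_closest_lattice_point_triangle
    (n m : ℕ) (hn : 0 < n) (hm : 0 < m) (e : ℕ) (he : e = Nat.gcd n m)
    (Γ : Set (ℝ × ℝ)) (hΓ : Γ = segment ℝ ((m : ℝ), (0 : ℝ)) ((0 : ℝ), (n : ℝ)))
    (Δ : Set (ℝ × ℝ))
    (hΔ : Δ = convexHull ℝ {((0 : ℝ), (0 : ℝ)), ((m : ℝ), (0 : ℝ)), ((0 : ℝ), (n : ℝ))}) :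
    ∃ (A₁ : ℤ × ℤ) (T : Set (ℝ × ℝ)),
      latticeEmb A₁ ∈ Δ \ Γ ∧
      T = convexHull ℝ {((m : ℝ), (0 : ℝ)), ((0 : ℝ), (n : ℝ)), latticeEmb A₁} ∧
      {p : ℤ × ℤ | latticeEmb p ∈ T} = {p : ℤ × ℤ | latticeEmb p ∈ Γ} ∪ {A₁} ∧
      ∃ (M : Matrix (Fin 2) (Fin 2) ℤ) (w : ℤ × ℤ),
        (M.det = 1 ∨ M.det = -1) ∧
        T = (fun v : ℝ × ℝ =>
              (((M 0 0 : ℝ) * v.1 + (M 0 1 : ℝ) * v.2 + (w.1 : ℝ)),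
               ((M 1 0 : ℝ) * v.1 + (M 1 1 : ℝ) * v.2 + (w.2 : ℝ)))) ''
            convexHull ℝ {((0 : ℝ), (0 : ℝ)), ((e : ℝ), (0 : ℝ)), ((0 : ℝ), (1 : ℝ))} := by
  subst hΓ hΔ
  obtain ⟨p, q, hpq, rfl, rfl⟩ : ∃ p q, Nat.Coprime p q ∧ n = p * e ∧ m = q * e := by
    rw [he]; exact Nat.exists_coprime n m
  have hp : (0 : ℤ) < p := by exact_mod_cast Nat.pos_of_mul_pos_right hn
  have hq : (0 : ℤ) < q := by exact_mod_cast Nat.pos_of_mul_pos_right hm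
  have he1 : (1 : ℤ) ≤ e := by exact_mod_cast Nat.pos_of_mul_pos_left hn
  obtain ⟨a, b, ha, hb, hab⟩ := exists_nonneg_mul_add_mul_eq (K := p * q * e - 1) hp hq
    (Nat.isCoprime_iff_coprime.2 hpq) (by nlinarith [le_mul_of_one_le_right (mul_pos hp hq).le he1])
  have hX : ((↑(q * e) : ℝ), (0 : ℝ)) = latticeEmb (q * e, 0) := by simp [latticeEmb]
  have hY : ((0 : ℝ), (↑(p * e) : ℝ)) = latticeEmb (0, p * e) := by simp [latticeEmb]
  have hXY : (p : ℤ) * (q * e) + q * 0 = p * 0 + q * (p * e) := by ring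
  have hZ : (p : ℤ) * a + q * b + 1 = p * (q * e) + q * 0 := by linear_combination hab
  refine ⟨(a, b), _, ⟨?_, ?_⟩, rfl, ?_, ?_⟩
  · have habR : (p * e * a + q * e * b : ℝ) = p * e * (q * e) - e := by
      have : (p * a + q * b : ℝ) = p * q * e - 1 := by exact_mod_cast hab
      linear_combination (e : ℝ) * this
    refine mk_mem_convexHull_zero_of_le (by positivity) (by positivity) (by exact_mod_cast ha)
      (by exact_mod_cast hb) ?_
    push_cast
    linarith [(Nat.cast_nonneg e : (0 : ℝ) ≤ e)]
  · rw [hX, hY]; exact latticeEmb_notMem_segment hXY hZ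
  · rw [hX, hY]; exact setOf_latticeEmb_mem_convexHull_triple hXY hZ
  · obtain ⟨M, w, hdet, himage⟩ := exists_det_eq_one_convexHull_eq_image (p := p) (q := q)
      (e := e) (a := a) (b := b) (by linear_combination hZ)
    refine ⟨M, w, Or.inl hdet, ?_⟩
    rw [hX, hY, himage, coe_intAffineMap, Int.cast_natCast]
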